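/- arXiv:2009.05296 — 4 statements merged into one kernel-verified Lean document; each statement's English description precedes it below -/
import Mathlib

section
/- The fourfold integral ∫₀^τ ds ∫_{-τ}^0 ds' ∫₀^τ dt' ∫_{-τ}^0 dt of exp(-(ℓ/2)(|s-t|+|s'-t'|+|s-t'|+|t-s'|-|s-s'|-|t-t'|)) equals (16/ℓ⁴) e^{-ℓτ} (e^{ℓτ/2}(ℓτ - 2) + 2)². -/
/-!
On the region `s, t' ∈ [0, τ]`, `s', t ∈ [-τ, 0]` the signs of `s - t`, `s' - t'`, `s - s'` and
`t - t'` are fixed, and those four terms cancel, leaving the exponent `|s - t'| + |t - s'|`.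
The integrand thus factors, and the fourfold integral is the product of two copies of
`∫∫_{[u,v]²} exp (-(a |x - y|)) = 2 (a (v - u) - 1 + exp (-(a (v - u)))) / a²` with `a = ℓ / 2`.
-/

open Real Set intervalIntegral

theorem integral_exp_neg_mul_abs_sub {a u v y : ℝ} (ha : a ≠ 0) (hy : y ∈ Icc u v) :
    ∫ x in u..v, exp (-(a * |x - y|)) =
      (2 - exp (-(a * (y - u))) - exp (-(a * (v - y)))) / a := by
  have hcont : Continuous fun x ↦ exp (-(a * |x - y|)) := by fun_prop
  have left : ∫ x in u..y, exp (-(a * |x - y|)) = (1 - exp (-(a * (y - u)))) / a := by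
    have hderiv : ∀ x ∈ uIcc u y, HasDerivAt (fun x ↦ exp (a * (x - y)) / a)
        (exp (-(a * |x - y|))) x := by
      intro x hx
      rw [uIcc_of_le hy.1] at hx
      rw [abs_of_nonpos (by linarith [hx.2]), mul_neg, neg_neg]
      refine ((((hasDerivAt_id' x).sub_const y).const_mul a).exp.div_const a).congr_deriv ?_
      field_simp
    rw [integral_eq_sub_of_hasDerivAt hderiv (hcont.intervalIntegrable _ _), sub_self, mul_zero,
      exp_zero, ← neg_sub y u, mul_neg, sub_div]
  have right : ∫ x in y..v, exp (-(a * |x - y|)) = (1 - exp (-(a * (v - y)))) / a := by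
    have hderiv : ∀ x ∈ uIcc y v, HasDerivAt (fun x ↦ -exp (-(a * (x - y))) / a)
        (exp (-(a * |x - y|))) x := by
      intro x hx
      rw [uIcc_of_le hy.2] at hx
      rw [abs_of_nonneg (by linarith [hx.1])]
      refine ((((hasDerivAt_id' x).sub_const y).const_mul a).fun_neg.exp.fun_neg.div_const
        a).congr_deriv ?_
      field_simp
    rw [integral_eq_sub_of_hasDerivAt hderiv (hcont.intervalIntegrable _ _), sub_self, mul_zero,
      neg_zero, exp_zero]
    ring
  rw [← integral_add_adjacent_intervals (hcont.intervalIntegrable u y)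
    (hcont.intervalIntegrable y v), left, right]
  ring

theorem integral_integral_exp_neg_mul_abs_sub {a u v : ℝ} (ha : a ≠ 0) (huv : u ≤ v) :
    ∫ y in u..v, ∫ x in u..v, exp (-(a * |x - y|)) =
      2 * (a * (v - u) - 1 + exp (-(a * (v - u)))) / a ^ 2 := by
  have hderiv : ∀ y ∈ uIcc u v, HasDerivAt
      (fun y ↦ (2 * y + exp (-(a * (y - u))) / a - exp (-(a * (v - y))) / a) / a)
      ((2 - exp (-(a * (y - u))) - exp (-(a * (v - y)))) / a) y := by
    intro y _
    have hu := (((hasDerivAt_id' y).sub_const u).const_mul a).fun_neg.exp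
    have hv := (((hasDerivAt_id' y).const_sub v).const_mul a).fun_neg.exp
    refine ((((hasDerivAt_id' y).const_mul 2).add (hu.div_const a)).sub
      (hv.div_const a)).div_const a |>.congr_deriv ?_
    field_simp
    ring
  rw [integral_congr fun y hy ↦ integral_exp_neg_mul_abs_sub ha (uIcc_of_le huv ▸ hy),
    integral_eq_sub_of_hasDerivAt hderiv ((by fun_prop : Continuous _).intervalIntegrable _ _)]
  simp only [sub_self, mul_zero, neg_zero, exp_zero]
  field_simp
  ring

theorem integral_integral_integral_integral_mul (f g : ℝ → ℝ → ℝ) (a b c d a' b' c' d' : ℝ) :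
    (∫ x in a..b, ∫ y in c..d, ∫ z in a'..b', ∫ w in c'..d', f x z * g w y) =
      (∫ x in a..b, ∫ z in a'..b', f x z) * ∫ y in c..d, ∫ w in c'..d', g w y := by
  simp only [integral_const_mul, integral_mul_const]

theorem g2_exponent_eq_of_nonneg_of_nonpos {s s' t t' : ℝ} (hs : 0 ≤ s) (ht' : 0 ≤ t')
    (hs' : s' ≤ 0) (ht : t ≤ 0) :
    |s - t| + |s' - t'| + |s - t'| + |t - s'| - |s - s'| - |t - t'| = |t' - s| + |t - s'| := by
  rw [abs_of_nonneg (by linarith : 0 ≤ s - t), abs_of_nonpos (by linarith : s' - t' ≤ 0),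
    abs_of_nonneg (by linarith : 0 ≤ s - s'), abs_of_nonpos (by linarith : t - t' ≤ 0),
    abs_sub_comm s t']
  ring

/-- The fourfold integral of the ideal second-order Glauber coherence function:
`∫₀^τ ds ∫_{-τ}^0 ds' ∫₀^τ dt' ∫_{-τ}^0 dt g⁽²⁾_ideal
  = (16/ℓ⁴) e^{-ℓτ} (e^{ℓτ/2}(ℓτ - 2) + 2)²`. -/
theorem fourfold_integral_g2_mixed (ℓ τ : ℝ) (hℓ : 0 < ℓ) (hτ : 0 < τ) :
    (∫ s in (0:ℝ)..τ, ∫ s' in (-τ)..(0:ℝ), ∫ t' in (0:ℝ)..τ, ∫ t in (-τ)..(0:ℝ),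
        Real.exp (-(ℓ / 2) *
          (|s - t| + |s' - t'| + |s - t'| + |t - s'| - |s - s'| - |t - t'|))) =
      (16 / ℓ ^ 4) * Real.exp (-(ℓ * τ)) *
        (Real.exp (ℓ * τ / 2) * (ℓ * τ - 2) + 2) ^ 2 := by
  have hτ' : -τ ≤ 0 := by linarith
  have hfactor : ∀ s ∈ uIcc 0 τ, ∀ s' ∈ uIcc (-τ) 0, ∀ t' ∈ uIcc 0 τ, ∀ t ∈ uIcc (-τ) 0,
      exp (-(ℓ / 2) * (|s - t| + |s' - t'| + |s - t'| + |t - s'| - |s - s'| - |t - t'|)) =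
        exp (-(ℓ / 2 * |t' - s|)) * exp (-(ℓ / 2 * |t - s'|)) := by
    intro s hs s' hs' t' ht' t ht
    rw [uIcc_of_le hτ.le] at hs ht'
    rw [uIcc_of_le hτ'] at hs' ht
    rw [g2_exponent_eq_of_nonneg_of_nonpos hs.1 ht'.1 hs'.2 ht.2, ← exp_add]
    ring_nf
  rw [integral_congr fun s hs ↦ integral_congr fun s' hs' ↦ integral_congr fun t' ht' ↦
      integral_congr fun t ht ↦ hfactor s hs s' hs' t' ht' t ht,
    integral_integral_integral_integral_mul,
    integral_integral_exp_neg_mul_abs_sub (by positivity) hτ.le,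
    integral_integral_exp_neg_mul_abs_sub (by positivity) hτ']
  have hhalf : exp (-(ℓ / 2 * τ)) = (exp (ℓ * τ / 2))⁻¹ := by rw [← exp_neg]; ring_nf
  have hfull : exp (-(ℓ * τ)) = (exp (ℓ * τ / 2) ^ 2)⁻¹ := by rw [← exp_nat_mul, ← exp_neg]; ring_nf
  rw [sub_zero, zero_sub, neg_neg, hhalf, hfull]
  field_simp
  ring
end

section
/- The fourfold integral ∫₀^τ ds ∫₀^τ ds' ∫_{-τ}^0 dt' ∫_{-τ}^0 dt of exp(-(ℓ/2)(|s-t|+|s'-t'|+|s-t'|+|t-s'|-|s-s'|-|t-t'|)) equals (4/(9ℓ⁴)) e^{-4ℓτ} (e^{ℓτ/2}-1)⁴ (2e^{ℓτ/2} + 3e^{ℓτ} + 1)². -/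
open Real intervalIntegral

lemma expInt (c a b : ℝ) (hc : c ≠ 0) :
    ∫ u in a..b, Real.exp (c * u) = (Real.exp (c * b) - Real.exp (c * a)) / c := by
  rw [intervalIntegral.integral_comp_mul_left (fun x => Real.exp x) hc, integral_exp]
  simp [smul_eq_mul, div_eq_inv_mul]

lemma innerF (ℓ τ s : ℝ) (hℓ : 0 < ℓ) (hs0 : 0 ≤ s) (hsτ : s ≤ τ) :
    ∫ s' in (0:ℝ)..τ, Real.exp (-ℓ * (s + s') + ℓ/2 * |s - s'|)
      = (2/(3*ℓ)) * Real.exp (-(ℓ/2) * s) + (4/(3*ℓ)) * Real.exp (-(2*ℓ) * s)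
        - (2/ℓ) * Real.exp (-(ℓ/2) * τ) * Real.exp (-(3*ℓ/2) * s) := by
  have hc : Continuous (fun s' : ℝ => Real.exp (-ℓ * (s + s') + ℓ/2 * |s - s'|)) := by fun_prop
  have hsplit := intervalIntegral.integral_add_adjacent_intervals
    (hc.intervalIntegrable (μ := MeasureTheory.volume) 0 s) (hc.intervalIntegrable s τ)
  rw [← hsplit]
  have h1 : (∫ s' in (0:ℝ)..s, Real.exp (-ℓ * (s + s') + ℓ/2 * |s - s'|))
      = Real.exp (-(ℓ/2) * s) * ((Real.exp (-(3*ℓ/2) * s) - 1) / (-(3*ℓ/2))) := by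
    rw [show (∫ s' in (0:ℝ)..s, Real.exp (-ℓ * (s + s') + ℓ/2 * |s - s'|))
        = ∫ s' in (0:ℝ)..s, Real.exp (-(ℓ/2) * s) * Real.exp (-(3*ℓ/2) * s') from
      intervalIntegral.integral_congr (fun s' hs' => by
        rw [Set.uIcc_of_le hs0] at hs'
        rw [abs_of_nonneg (by linarith [hs'.2] : (0:ℝ) ≤ s - s'), ← Real.exp_add]
        ring_nf)]
    rw [intervalIntegral.integral_const_mul, expInt _ _ _ (ne_of_lt (by linarith) : -(3*ℓ/2) ≠ 0)]
    simp
  have h2 : (∫ s' in s..τ, Real.exp (-ℓ * (s + s') + ℓ/2 * |s - s'|))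
      = Real.exp (-(3*ℓ/2) * s) * ((Real.exp (-(ℓ/2) * τ) - Real.exp (-(ℓ/2) * s)) / (-(ℓ/2))) := by
    rw [show (∫ s' in s..τ, Real.exp (-ℓ * (s + s') + ℓ/2 * |s - s'|))
        = ∫ s' in s..τ, Real.exp (-(3*ℓ/2) * s) * Real.exp (-(ℓ/2) * s') from
      intervalIntegral.integral_congr (fun s' hs' => by
        rw [Set.uIcc_of_le hsτ] at hs'
        rw [abs_of_nonpos (by linarith [hs'.1] : s - s' ≤ 0), ← Real.exp_add]
        ring_nf)]
    rw [intervalIntegral.integral_const_mul, expInt _ _ _ (ne_of_lt (by linarith) : -(ℓ/2) ≠ 0)]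
  rw [h1, h2]
  have hu : Real.exp (-(ℓ/2) * s) * Real.exp (-(3*ℓ/2) * s) = Real.exp (-(2*ℓ) * s) := by
    rw [← Real.exp_add]; ring_nf
  rw [← hu]
  have hℓ' : ℓ ≠ 0 := ne_of_gt hℓ
  field_simp
  ring

lemma outerF (ℓ τ : ℝ) (hℓ : 0 < ℓ) :
    ∫ s in (0:ℝ)..τ, ((2/(3*ℓ)) * Real.exp (-(ℓ/2) * s) + (4/(3*ℓ)) * Real.exp (-(2*ℓ) * s)
        - (2/ℓ) * Real.exp (-(ℓ/2) * τ) * Real.exp (-(3*ℓ/2) * s))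
      = (2/(3*ℓ^2)) * (3 - 4 * Real.exp (-(ℓ/2) * τ) + Real.exp (-(ℓ/2) * τ) ^ 4) := by
  have i1 : IntervalIntegrable (fun s : ℝ => (2/(3*ℓ)) * Real.exp (-(ℓ/2) * s)
      + (4/(3*ℓ)) * Real.exp (-(2*ℓ) * s)) MeasureTheory.volume 0 τ :=
    (Continuous.intervalIntegrable (by fun_prop) 0 τ)
  have i2 : IntervalIntegrable (fun s : ℝ => (2/ℓ) * Real.exp (-(ℓ/2) * τ) * Real.exp (-(3*ℓ/2) * s))
      MeasureTheory.volume 0 τ := (Continuous.intervalIntegrable (by fun_prop) 0 τ)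
  rw [intervalIntegral.integral_sub i1 i2,
    intervalIntegral.integral_add
      ((Continuous.intervalIntegrable (by fun_prop) 0 τ))
      ((Continuous.intervalIntegrable (by fun_prop) 0 τ)),
    intervalIntegral.integral_const_mul, intervalIntegral.integral_const_mul,
    intervalIntegral.integral_const_mul,
    expInt _ _ _ (ne_of_lt (by linarith) : -(ℓ/2) ≠ 0),
    expInt _ _ _ (ne_of_lt (by linarith) : -(2*ℓ) ≠ 0),
    expInt _ _ _ (ne_of_lt (by linarith) : -(3*ℓ/2) ≠ 0)]
  set x := Real.exp (-(ℓ/2) * τ) with hx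
  have h4 : Real.exp (-(2*ℓ) * τ) = x ^ 4 := by
    rw [hx, ← Real.exp_nat_mul]; norm_num; ring_nf
  have h3 : Real.exp (-(3*ℓ/2) * τ) = x ^ 3 := by
    rw [hx, ← Real.exp_nat_mul]; norm_num; ring_nf
  rw [h4, h3]
  simp only [mul_zero, Real.exp_zero]
  have hℓ' : ℓ ≠ 0 := ne_of_gt hℓ
  field_simp
  ring

lemma Feval (ℓ τ : ℝ) (hℓ : 0 < ℓ) (hτ : 0 < τ) :
    ∫ s in (0:ℝ)..τ, ∫ s' in (0:ℝ)..τ, Real.exp (-ℓ * (s + s') + ℓ/2 * |s - s'|)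
      = (2/(3*ℓ^2)) * (3 - 4 * Real.exp (-(ℓ/2) * τ) + Real.exp (-(ℓ/2) * τ) ^ 4) := by
  rw [← outerF ℓ τ hℓ]
  refine intervalIntegral.integral_congr (fun s hs => ?_)
  rw [Set.uIcc_of_le hτ.le] at hs
  exact innerF ℓ τ s hℓ hs.1 hs.2

lemma negflip (τ : ℝ) (f : ℝ → ℝ) : ∫ x in (-τ)..(0:ℝ), f x = ∫ x in (0:ℝ)..τ, f (-x) := by
  rw [intervalIntegral.integral_comp_neg f]
  norm_num

lemma Geval (ℓ τ : ℝ) (hℓ : 0 < ℓ) (hτ : 0 < τ) :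
    ∫ t' in (-τ)..(0:ℝ), ∫ t in (-τ)..(0:ℝ), Real.exp (ℓ * (t + t') + ℓ/2 * |t - t'|)
      = (2/(3*ℓ^2)) * (3 - 4 * Real.exp (-(ℓ/2) * τ) + Real.exp (-(ℓ/2) * τ) ^ 4) := by
  rw [← Feval ℓ τ hℓ hτ,
    negflip τ (fun t' => ∫ t in (-τ)..(0:ℝ), Real.exp (ℓ * (t + t') + ℓ/2 * |t - t'|))]
  refine intervalIntegral.integral_congr (fun s _ => ?_)
  rw [negflip τ (fun t => Real.exp (ℓ * (t + -s) + ℓ/2 * |t - -s|))]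
  refine intervalIntegral.integral_congr (fun s' _ => ?_)
  rw [show ℓ * (-s' + -s) + ℓ/2 * |-s' - -s| = -ℓ * (s + s') + ℓ/2 * |s - s'| by
    rw [show (-s' - -s) = s - s' by ring]; ring]

/-- The fourfold integral of the ideal second-order Glauber coherence function:
`∫₀^τ ds ∫₀^τ ds' ∫_{-τ}^0 dt' ∫_{-τ}^0 dt g⁽²⁾_ideal
  = (4/(9ℓ⁴)) e^{-4ℓτ} (e^{ℓτ/2}-1)⁴ (2e^{ℓτ/2} + 3e^{ℓτ} + 1)²`. -/
theorem fourfold_integral_g2_same (ℓ τ : ℝ) (hℓ : 0 < ℓ) (hτ : 0 < τ) :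
    (∫ s in (0:ℝ)..τ, ∫ s' in (0:ℝ)..τ, ∫ t' in (-τ)..(0:ℝ), ∫ t in (-τ)..(0:ℝ),
        Real.exp (-(ℓ / 2) *
          (|s - t| + |s' - t'| + |s - t'| + |t - s'| - |s - s'| - |t - t'|))) =
      (4 / (9 * ℓ ^ 4)) * Real.exp (-(4 * ℓ * τ)) * (Real.exp (ℓ * τ / 2) - 1) ^ 4 *
        (2 * Real.exp (ℓ * τ / 2) + 3 * Real.exp (ℓ * τ) + 1) ^ 2 := by
  have hτ' : -τ ≤ (0:ℝ) := by linarith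
  have key : (∫ s in (0:ℝ)..τ, ∫ s' in (0:ℝ)..τ, ∫ t' in (-τ)..(0:ℝ), ∫ t in (-τ)..(0:ℝ),
        Real.exp (-(ℓ / 2) *
          (|s - t| + |s' - t'| + |s - t'| + |t - s'| - |s - s'| - |t - t'|)))
      = ∫ s in (0:ℝ)..τ, ∫ s' in (0:ℝ)..τ,
          Real.exp (-ℓ * (s + s') + ℓ/2 * |s - s'|) *
            (∫ t' in (-τ)..(0:ℝ), ∫ t in (-τ)..(0:ℝ),
              Real.exp (ℓ * (t + t') + ℓ/2 * |t - t'|)) := by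
    refine intervalIntegral.integral_congr (fun s hs => ?_)
    rw [Set.uIcc_of_le hτ.le] at hs
    refine intervalIntegral.integral_congr (fun s' hs' => ?_)
    rw [Set.uIcc_of_le hτ.le] at hs'
    rw [← intervalIntegral.integral_const_mul]
    refine intervalIntegral.integral_congr (fun t' ht' => ?_)
    rw [Set.uIcc_of_le hτ'] at ht'
    rw [← intervalIntegral.integral_const_mul]
    refine intervalIntegral.integral_congr (fun t ht => ?_)
    rw [Set.uIcc_of_le hτ'] at ht
    rw [← Real.exp_add]
    congr 1
    rw [abs_of_nonneg (by linarith [hs.1, ht.2] : (0:ℝ) ≤ s - t),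
      abs_of_nonneg (by linarith [hs'.1, ht'.2] : (0:ℝ) ≤ s' - t'),
      abs_of_nonneg (by linarith [hs.1, ht'.2] : (0:ℝ) ≤ s - t'),
      abs_of_nonpos (by linarith [hs'.1, ht.2] : t - s' ≤ 0)]
    ring
  rw [key]
  simp only [intervalIntegral.integral_mul_const]
  rw [Feval ℓ τ hℓ hτ, Geval ℓ τ hℓ hτ]
  -- algebra
  set A := Real.exp (-(ℓ/2) * τ) with hA
  have hA0 : A ≠ 0 := Real.exp_ne_zero _
  have hE : Real.exp (ℓ * τ / 2) = A⁻¹ := by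
    refine eq_inv_of_mul_eq_one_left ?_
    rw [hA, ← Real.exp_add, show ℓ * τ / 2 + -(ℓ / 2) * τ = 0 by ring, Real.exp_zero]
  have hF : Real.exp (ℓ * τ) = (A^2)⁻¹ := by
    refine eq_inv_of_mul_eq_one_left ?_
    rw [hA, sq, ← Real.exp_add, ← Real.exp_add,
      show ℓ * τ + (-(ℓ / 2) * τ + -(ℓ / 2) * τ) = 0 by ring, Real.exp_zero]
  have h8 : Real.exp (-(4 * ℓ * τ)) = A ^ 8 := by
    rw [hA, ← Real.exp_nat_mul]
    norm_num
    ring_nf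
  rw [hE, hF, h8]
  have hℓ' : ℓ ≠ 0 := ne_of_gt hℓ
  field_simp
  ring
end

section
/- Let (c_1,...,c_N) and (x_1,...,x_N) be real with c_1 < c_2 < ... < c_N and 0 < x_1 < x_2 < ... < x_N. Then the generalized Vandermonde matrix W with entries W_{ij} = x_i^{c_j} has positive determinant. -/
/-!
The determinant never vanishes: a kernel vector `a` would give a function `∑ⱼ aⱼ t ^ cⱼ` with
`N` positive zeros, and dividing by `t ^ c₀` and differentiating (Rolle) yields a function of
the same kind with one term fewer and `N - 1` positive zeros, so `a = 0` by induction.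
The increasing exponent vectors form a convex, hence connected, set on which the determinant
is continuous in `c`, so it has the sign it takes at `c = (0, 1, …, N - 1)`, where `W` is an
ordinary Vandermonde matrix with positive determinant.
-/

open Set Finset

theorem IsPreconnected.pos_of_ne_zero {X : Type*} [TopologicalSpace X] {s : Set X}
    (hs : IsPreconnected s) {f : X → ℝ} (hf : ContinuousOn f s) (hne : ∀ x ∈ s, f x ≠ 0)
    {a b : X} (ha : a ∈ s) (hb : b ∈ s) (hfa : 0 < f a) : 0 < f b := by
  by_contra! hfb
  obtain ⟨x, hx, hfx⟩ := hs.intermediate_value hb ha hf ⟨hfb, hfa.le⟩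
  exact hne x hx hfx

theorem convex_setOf_strictMono {ι : Type*} [Preorder ι] :
    Convex ℝ {f : ι → ℝ | StrictMono f} := by
  intro f hf g hg s t hs ht hst i j hij
  have := hf hij
  have := hg hij
  simp only [Pi.add_apply, Pi.smul_apply, smul_eq_mul]
  rcases hs.eq_or_lt with rfl | hs
  · simp_all
  · nlinarith

theorem hasDerivAt_sum_mul_rpow {ι : Type*} [Fintype ι] (a c : ι → ℝ) {t : ℝ} (ht : 0 < t) :
    HasDerivAt (fun t => ∑ j, a j * t ^ c j) (∑ j, a j * c j * t ^ (c j - 1)) t := by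
  refine HasDerivAt.fun_sum fun j _ => ?_
  simpa [mul_assoc] using
    (Real.hasDerivAt_rpow_const (p := c j) (Or.inl ht.ne')).const_mul (a j)

theorem exists_strictMono_deriv_eq_zero {f f' : ℝ → ℝ} {N : ℕ} {x : Fin (N + 1) → ℝ}
    (hx : StrictMono x) (hf : ∀ t ∈ Icc (x 0) (x (Fin.last N)), HasDerivAt f (f' t) t)
    (hfx : ∀ i, f (x i) = 0) :
    ∃ y : Fin N → ℝ, StrictMono y ∧ (∀ i, x 0 < y i) ∧ ∀ i, f' (y i) = 0 := by
  have hIcc : ∀ i j, Icc (x i) (x j) ⊆ Icc (x 0) (x (Fin.last N)) := fun i j =>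
    Icc_subset_Icc (hx.monotone (Fin.zero_le i)) (hx.monotone (Fin.le_last j))
  have hrolle : ∀ i : Fin N, ∃ y ∈ Ioo (x i.castSucc) (x i.succ), f' y = 0 := fun i =>
    exists_hasDerivAt_eq_zero (hx i.castSucc_lt_succ)
      (fun t ht => (hf t (hIcc _ _ ht)).continuousAt.continuousWithinAt)
      ((hfx _).trans (hfx _).symm) (fun t ht => hf t (hIcc _ _ (Ioo_subset_Icc_self ht)))
  choose y hy hy0 using hrolle
  refine ⟨y, fun i j hij => ?_, fun i => ?_, hy0⟩
  · calc y i < x i.succ := (hy i).2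
      _ ≤ x j.castSucc := hx.monotone (Fin.succ_le_castSucc_iff.mpr hij)
      _ < y j := (hy j).1
  · exact (hx.monotone (Fin.zero_le _)).trans_lt (hy i).1

theorem eq_zero_of_sum_mul_rpow_eq_zero {N : ℕ} {c a x : Fin N → ℝ} (hc : StrictMono c)
    (hx : StrictMono x) (hxpos : ∀ i, 0 < x i) (hz : ∀ i, ∑ j, a j * x i ^ c j = 0) :
    a = 0 := by
  induction N with
  | zero => exact Subsingleton.elim _ _
  | succ N ih =>
    set g : ℝ → ℝ := fun t => ∑ j, a j * t ^ (c j - c 0)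
    have hg : ∀ i, g (x i) = 0 := fun i => by
      have : g (x i) = x i ^ (-c 0) * ∑ j, a j * x i ^ c j := by
        simp only [g, mul_sum, sub_eq_neg_add, Real.rpow_add (hxpos i)]
        exact sum_congr rfl fun j _ => by ring
      rw [this, hz, mul_zero]
    obtain ⟨y, hy, hxy, hy0⟩ := exists_strictMono_deriv_eq_zero hx
      (fun t ht => hasDerivAt_sum_mul_rpow a (c · - c 0) ((hxpos 0).trans_le ht.1)) hg
    have hsucc : (fun j : Fin N => a j.succ * (c j.succ - c 0)) = 0 :=
      ih (c := fun j => c j.succ - c 0 - 1)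
        (fun j k h => by simpa using hc (Fin.succ_lt_succ_iff.mpr h)) hy
        (fun i => (hxpos 0).trans (hxy i)) fun i => by simpa [Fin.sum_univ_succ] using hy0 i
    have ha : ∀ j : Fin N, a j.succ = 0 := fun j =>
      (mul_eq_zero.mp (congrFun hsucc j)).resolve_right (sub_ne_zero.mpr (hc j.succ_pos).ne')
    have ha0 : a 0 = 0 := by
      have := hz 0
      simp only [Fin.sum_univ_succ, ha, zero_mul, sum_const_zero, add_zero] at this
      exact (mul_eq_zero.mp this).resolve_right (Real.rpow_pos_of_pos (hxpos 0) _).ne'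
    ext j
    cases j using Fin.cases
    exacts [ha0, ha _]

noncomputable def rpowVandermonde {N : ℕ} (x c : Fin N → ℝ) : Matrix (Fin N) (Fin N) ℝ :=
  Matrix.of fun i j => x i ^ c j

theorem rpowVandermonde_natCast {N : ℕ} (x : Fin N → ℝ) :
    rpowVandermonde x (fun j => (j : ℕ)) = Matrix.vandermonde x := by
  ext i j
  simp [rpowVandermonde, Matrix.vandermonde_apply, Real.rpow_natCast]

theorem det_rpowVandermonde_ne_zero {N : ℕ} {x c : Fin N → ℝ} (hx : StrictMono x)
    (hxpos : ∀ i, 0 < x i) (hc : StrictMono c) : (rpowVandermonde x c).det ≠ 0 := by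
  intro hdet
  obtain ⟨a, ha, hWa⟩ := Matrix.exists_mulVec_eq_zero_iff.mpr hdet
  refine ha (eq_zero_of_sum_mul_rpow_eq_zero hc hx hxpos fun i => ?_)
  simpa [rpowVandermonde, Matrix.mulVec, dotProduct, mul_comm] using congrFun hWa i

theorem continuous_det_rpowVandermonde {N : ℕ} {x : Fin N → ℝ} (hxpos : ∀ i, 0 < x i) :
    Continuous fun c => (rpowVandermonde x c).det :=
  Continuous.matrix_det <| continuous_matrix fun i j =>
    continuous_const.rpow (continuous_apply j) fun _ => Or.inl (hxpos i).ne'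

theorem det_rpowVandermonde_pos {N : ℕ} {x c : Fin N → ℝ} (hx : StrictMono x)
    (hxpos : ∀ i, 0 < x i) (hc : StrictMono c) : 0 < (rpowVandermonde x c).det := by
  have hnat : StrictMono fun j : Fin N => ((j : ℕ) : ℝ) := fun i j h => Nat.cast_lt.mpr h
  refine convex_setOf_strictMono.isPreconnected.pos_of_ne_zero
    (continuous_det_rpowVandermonde hxpos).continuousOn
    (fun c hc => det_rpowVandermonde_ne_zero hx hxpos hc) hnat hc ?_
  rw [rpowVandermonde_natCast, Matrix.det_vandermonde]
  exact prod_pos fun i _ => prod_pos fun j hj => sub_pos.mpr (hx (mem_Ioi.mp hj))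

theorem generalized_vandermonde_det_pos_general
    (N : ℕ) (c x : Fin N → ℝ)
    (hc : StrictMono c) (hx : StrictMono x) (hxpos : ∀ i, 0 < x i) :
    0 < (Matrix.of fun i j : Fin N => (x i) ^ (c j)).det :=
  det_rpowVandermonde_pos hx hxpos hc

/-- Positivity of the generalized Vandermonde determinant: for strictly increasing
real exponents `c` and strictly increasing positive nodes `x`, the matrix
`W_{ij} = x_i ^ c_j` has positive determinant. -/
theorem generalized_vandermonde_det_pos
    (N : ℕ) (hN : 1 ≤ N) (c x : Fin N → ℝ)
    (hc : StrictMono c) (hx : StrictMono x) (hxpos : ∀ i, 0 < x i) :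
    0 < (Matrix.of fun i j : Fin N => (x i) ^ (c j)).det :=
  generalized_vandermonde_det_pos_general N c x hc hx hxpos
end

section
/- The entropy of the binomial distribution Binomial(j, 1/2), namely H(j) = -∑_{k=0}^j 2^{-j} C(j,k) ln(2^{-j} C(j,k)), satisfies H(j) = (1/2) ln(π e j / 2) + o(1) as j → ∞. -/
/-!
The entropy is the mean of the surprisal `-log p_k` of `p_k = C(j,k) / 2^j`. Compare it with the
surprisal `log (π j / 2) / 2 + (2k - j)² / (2j)` of the normal approximation `N(j/2, j/4)`, whose
mean is exactly `log (π e j / 2) / 2` because `2k - j` has variance `j`.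
On the window `j/4 ≤ k ≤ 3j/4`, Stirling's formula turns the difference into
`j φ(u) - 2ju² + log (1 - 4u²) / 2` plus Stirling remainders at arguments `≥ j/4`, where
`u = (2k - j) / (2j)` and
`φ(u) = (1/2 + u) log (1 + 2u) + (1/2 - u) log (1 - 2u) = 2u² + O(u⁴)`; its mean is
`O(1/j) + o(1)` by the fourth moment `E (2k - j)⁴ = 3j² - 2j`. Off the window the difference is
`O(j)`, and by Markov's inequality for the same fourth moment the window's complement has
probability `O(1/j²)`.
-/

open Filter Finset Real Topology

namespace BinomialEntropy

theorem sum_range_choose_succ_mul {R : Type*} [NonAssocSemiring R] (g : ℕ → R) (n : ℕ) :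
    ∑ i ∈ range (n + 1 + 1), ((n + 1).choose i : R) * g i
      = ∑ i ∈ range (n + 1), (n.choose i : R) * (g i + g (i + 1)) := by
  simpa only [mul_add, sum_add_distrib] using sum_choose_succ_mul (fun i _ => g i) n

theorem sum_choose_mul_sq (j : ℕ) :
    ∑ k ∈ range (j + 1), (j.choose k : ℝ) * (2 * k - j) ^ 2 = (j : ℝ) * 2 ^ j := by
  induction j with
  | zero => simp
  | succ j ih =>
    rw [sum_range_choose_succ_mul]
    calc _ = ∑ k ∈ range (j + 1),
          (2 * ((j.choose k : ℝ) * (2 * k - j) ^ 2) + 2 * j.choose k) := by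
          push_cast; congr! 1 with k; ring
      _ = ((j + 1 : ℕ) : ℝ) * 2 ^ (j + 1) := by
          rw [sum_add_distrib, ← mul_sum, ← mul_sum, ih]
          push_cast [← Nat.cast_sum, Nat.sum_range_choose]; ring

theorem sum_choose_mul_pow_four (j : ℕ) :
    ∑ k ∈ range (j + 1), (j.choose k : ℝ) * (2 * k - j) ^ 4
      = (3 * (j : ℝ) ^ 2 - 2 * j) * 2 ^ j := by
  induction j with
  | zero => simp
  | succ j ih =>
    rw [sum_range_choose_succ_mul]
    calc _ = ∑ k ∈ range (j + 1), (2 * ((j.choose k : ℝ) * (2 * k - j) ^ 4)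
              + 12 * ((j.choose k : ℝ) * (2 * k - j) ^ 2) + 2 * j.choose k) := by
          push_cast; congr! 1 with k; ring
      _ = (3 * ((j + 1 : ℕ) : ℝ) ^ 2 - 2 * (j + 1 : ℕ)) * 2 ^ (j + 1) := by
          rw [sum_add_distrib, sum_add_distrib, ← mul_sum, ← mul_sum, ← mul_sum, ih,
            sum_choose_mul_sq]
          push_cast [← Nat.cast_sum, Nat.sum_range_choose]; ring

theorem abs_log_one_sub_add_sum_range_le {x : ℝ} (hx : |x| ≤ 1 / 2) (n : ℕ) :
    |∑ i ∈ range n, x ^ (i + 1) / (i + 1) + log (1 - x)| ≤ 2 * |x| ^ (n + 1) := by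
  refine (abs_log_sub_add_sum_range_le (by linarith) n).trans ?_
  rw [div_le_iff₀ (by linarith)]
  nlinarith [pow_nonneg (abs_nonneg x) (n + 1)]

theorem abs_log_one_sub_le {x : ℝ} (hx : |x| ≤ 1 / 2) : |log (1 - x)| ≤ 2 * |x| := by
  simpa using abs_log_one_sub_add_sum_range_le hx 0

/-- With `r x = log (1 - x) + x + x² / 2 + x³ / 3`, the left side is
`(1/2 + u) r (-2u) + (1/2 - u) r (2u) + 16u⁴/3`, and `|r (±2u)| ≤ 32u⁴`. -/
theorem abs_log_add_log_sub_two_mul_sq_le {u : ℝ} (hu : |u| ≤ 1 / 4) :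
    |(1 / 2 + u) * log (1 + 2 * u) + (1 / 2 - u) * log (1 - 2 * u) - 2 * u ^ 2|
      ≤ 38 * u ^ 4 := by
  have h2u : |2 * u| ≤ 1 / 2 := by rw [abs_mul, abs_two]; linarith
  have hplus := abs_log_one_sub_add_sum_range_le (x := -(2 * u)) (by rwa [abs_neg]) 3
  have hminus := abs_log_one_sub_add_sum_range_le h2u 3
  simp only [sum_range_succ, sum_range_zero, abs_neg, sub_neg_eq_add, abs_mul, abs_two]
    at hplus hminus
  obtain ⟨hu₁, hu₂⟩ := abs_le.mp hu
  rw [abs_le] at hplus hminus ⊢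
  have h4 : (2 * |u|) ^ 4 = 16 * u ^ 4 := by
    rw [mul_pow, pow_abs, abs_of_nonneg (by positivity)]; norm_num
  norm_num [h4] at hplus hminus
  constructor <;> nlinarith [mul_le_mul_of_nonneg_left hplus.1 (by linarith : (0:ℝ) ≤ 1/2 + u),
    mul_le_mul_of_nonneg_left hplus.2 (by linarith : (0:ℝ) ≤ 1/2 + u),
    mul_le_mul_of_nonneg_left hminus.1 (by linarith : (0:ℝ) ≤ 1/2 - u),
    mul_le_mul_of_nonneg_left hminus.2 (by linarith : (0:ℝ) ≤ 1/2 - u)]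

noncomputable def stirlingRemainder (n : ℕ) : ℝ := log (Stirling.stirlingSeq n) - log √π

theorem tendsto_stirlingRemainder : Tendsto stirlingRemainder atTop (𝓝 0) := by
  have := ((continuousAt_log (by positivity)).tendsto.comp
    Stirling.tendsto_stirlingSeq_sqrt_pi).sub_const (log √π)
  rwa [sub_self] at this

theorem stirlingRemainder_nonneg {n : ℕ} (hn : n ≠ 0) : 0 ≤ stirlingRemainder n :=
  sub_nonneg.mpr (log_le_log (by positivity) (Stirling.sqrt_pi_le_stirlingSeq hn))

theorem stirlingRemainder_le_of_le {m n : ℕ} (hm : m ≠ 0) (hmn : m ≤ n) :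
    stirlingRemainder n ≤ stirlingRemainder m := by
  obtain ⟨m, rfl⟩ := Nat.exists_eq_succ_of_ne_zero hm
  obtain ⟨n, rfl⟩ : ∃ n', n = n' + 1 := ⟨n - 1, by omega⟩
  exact sub_le_sub_right (Stirling.log_stirlingSeq'_antitone (Nat.le_of_succ_le_succ hmn)) _

theorem log_factorial_eq {n : ℕ} (hn : n ≠ 0) :
    log n.factorial = n * log n - n + log (2 * π * n) / 2 + stirlingRemainder n := by
  have hn' : (n : ℝ) ≠ 0 := Nat.cast_ne_zero.mpr hn
  rw [stirlingRemainder, Stirling.log_stirlingSeq_formula, log_sqrt pi_pos.le,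
    log_div hn' (exp_ne_zero 1), log_exp, log_mul (by positivity) hn', log_mul (by positivity) hn',
    log_mul two_ne_zero pi_ne_zero]
  ring

noncomputable def binomHalf (j k : ℕ) : ℝ := ((2 : ℝ) ^ j)⁻¹ * j.choose k

theorem binomHalf_pos {j k : ℕ} (hk : k ≤ j) : 0 < binomHalf j k := by
  have := Nat.choose_pos hk
  unfold binomHalf
  positivity

theorem sum_binomHalf_mul (j : ℕ) (f : ℕ → ℝ) :
    ∑ k ∈ range (j + 1), binomHalf j k * f k
      = ((2 : ℝ) ^ j)⁻¹ * ∑ k ∈ range (j + 1), (j.choose k : ℝ) * f k := by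
  simp only [binomHalf, mul_sum, mul_assoc]

theorem sum_binomHalf (j : ℕ) : ∑ k ∈ range (j + 1), binomHalf j k = 1 := by
  simpa [← Nat.cast_sum, Nat.sum_range_choose] using sum_binomHalf_mul j 1

theorem sum_binomHalf_mul_sq (j : ℕ) :
    ∑ k ∈ range (j + 1), binomHalf j k * (2 * k - j) ^ 2 = (j : ℝ) := by
  rw [sum_binomHalf_mul, sum_choose_mul_sq]; field_simp

theorem sum_binomHalf_mul_pow_four (j : ℕ) :
    ∑ k ∈ range (j + 1), binomHalf j k * (2 * k - j) ^ 4 = 3 * (j : ℝ) ^ 2 - 2 * j := by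
  rw [sum_binomHalf_mul, sum_choose_mul_pow_four]; field_simp

theorem abs_sum_binomHalf_mul_le {j : ℕ} (s : Finset ℕ) (hs : s ⊆ range (j + 1))
    (f : ℕ → ℝ) :
    |∑ k ∈ s, binomHalf j k * f k| ≤ ∑ k ∈ s, binomHalf j k * |f k| := by
  refine (abs_sum_le_sum_abs _ _).trans_eq (sum_congr rfl fun k hk => ?_)
  rw [abs_mul, abs_of_pos (binomHalf_pos (mem_range_succ_iff.mp (hs hk)))]

theorem neg_log_binomHalf_nonneg {j k : ℕ} : 0 ≤ -log (binomHalf j k) := by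
  rw [neg_nonneg]
  refine log_nonpos (by unfold binomHalf; positivity) ?_
  rw [binomHalf, inv_mul_le_one₀ (by positivity)]
  exact_mod_cast Nat.choose_le_two_pow j k

theorem neg_log_binomHalf_le {j k : ℕ} (hk : k ≤ j) : -log (binomHalf j k) ≤ j * log 2 := by
  have : (1 : ℝ) ≤ j.choose k := by exact_mod_cast Nat.choose_pos hk
  rw [binomHalf, log_mul (by positivity) (by positivity), log_inv, log_pow]
  linarith [log_nonneg this]

theorem neg_log_binomHalf_eq {j k : ℕ} (hk : 0 < k) (hkj : k < j) {u : ℝ}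
    (hu : (k : ℝ) = j * (1 + 2 * u) / 2) :
    -log (binomHalf j k) = log (π * j / 2) / 2
      + j * ((1 / 2 + u) * log (1 + 2 * u) + (1 / 2 - u) * log (1 - 2 * u))
      + log (1 - 4 * u ^ 2) / 2
      + (stirlingRemainder k + stirlingRemainder (j - k) - stirlingRemainder j) := by
  have hj : (0 : ℝ) < j := by exact_mod_cast hk.trans hkj
  have hk' : (0 : ℝ) < k := by exact_mod_cast hk
  have hjk : ((j - k : ℕ) : ℝ) = j * (1 - 2 * u) / 2 := by
    push_cast [Nat.cast_sub hkj.le]; linarith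
  have hjk' : (0 : ℝ) < ((j - k : ℕ) : ℝ) := by exact_mod_cast Nat.sub_pos_of_lt hkj
  have hplus : 0 < 1 + 2 * u := by nlinarith
  have hminus : 0 < 1 - 2 * u := by nlinarith
  have log_half (v : ℝ) (hv : 0 < v) : log (j * v / 2) = log j + log v - log 2 := by
    rw [log_div (by positivity) two_ne_zero, log_mul hj.ne' hv.ne']
  have log_two_pi (x : ℝ) (hx : 0 < x) : log (2 * π * x) = log 2 + log π + log x := by
    rw [log_mul (by positivity) hx.ne', log_mul two_ne_zero pi_ne_zero]
  have hchoose : log (j.choose k : ℝ)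
      = log j.factorial - log k.factorial - log (j - k).factorial := by
    rw [Nat.cast_choose ℝ hkj.le, log_div (by positivity) (by positivity),
      log_mul (by positivity) (by positivity)]
    ring
  rw [binomHalf, log_mul (by positivity) (Nat.cast_ne_zero.mpr (Nat.choose_pos hkj.le).ne'),
    log_inv, log_pow, hchoose, log_factorial_eq (hk.trans hkj).ne', log_factorial_eq hk.ne',
    log_factorial_eq (Nat.sub_pos_of_lt hkj).ne', log_two_pi _ hj,
    log_two_pi _ hk', log_two_pi _ hjk', hjk, hu, log_half _ hplus, log_half _ hminus,
    show 1 - 4 * u ^ 2 = (1 + 2 * u) * (1 - 2 * u) by ring, log_mul hplus.ne' hminus.ne',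
    show π * j / 2 = j * π / 2 by ring, log_half _ pi_pos]
  ring

noncomputable def gaussSurprisal (j k : ℕ) : ℝ :=
  log (π * j / 2) / 2 + (2 * k - j) ^ 2 / (2 * j)

theorem sum_binomHalf_mul_gaussSurprisal {j : ℕ} (hj : j ≠ 0) :
    ∑ k ∈ range (j + 1), binomHalf j k * gaussSurprisal j k
      = 1 / 2 * log (π * exp 1 * j / 2) := by
  have hj' : (j : ℝ) ≠ 0 := Nat.cast_ne_zero.mpr hj
  have hsq : ∑ k ∈ range (j + 1), binomHalf j k * ((2 * k - j) ^ 2 / (2 * j)) = 1 / 2 := by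
    simp_rw [← mul_div_assoc, ← sum_div, sum_binomHalf_mul_sq]; field_simp
  simp_rw [gaussSurprisal, mul_add, sum_add_distrib, ← sum_mul, sum_binomHalf, hsq]
  rw [show π * exp 1 * j / 2 = π * j / 2 * exp 1 by ring,
    log_mul (by positivity) (exp_ne_zero 1), log_exp]
  ring

theorem gaussSurprisal_nonneg {j k : ℕ} (hj : j ≠ 0) : 0 ≤ gaussSurprisal j k := by
  have : (1 : ℝ) ≤ j := by exact_mod_cast Nat.one_le_iff_ne_zero.mpr hj
  have : (1 : ℝ) ≤ π * j / 2 := by nlinarith [pi_gt_three]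
  have := log_nonneg this
  unfold gaussSurprisal
  positivity

theorem gaussSurprisal_le {j k : ℕ} (hk : k ≤ j) : gaussSurprisal j k ≤ 2 * j := by
  rcases Nat.eq_zero_or_pos j with rfl | hj
  · simp [gaussSurprisal]
  have hj' : (0 : ℝ) < j := by exact_mod_cast hj
  have hk' : (k : ℝ) ≤ j := by exact_mod_cast hk
  have hlog : log (π * j / 2) ≤ 3 * j := by
    nlinarith [log_le_sub_one_of_pos (by positivity : 0 < π * j / 2), pi_lt_four]
  have hsq : (2 * k - j : ℝ) ^ 2 / (2 * j) ≤ j / 2 := by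
    rw [div_le_iff₀ (by positivity)]; nlinarith [(Nat.cast_nonneg k : (0 : ℝ) ≤ k)]
  unfold gaussSurprisal
  linarith

theorem abs_neg_log_binomHalf_sub_gaussSurprisal_le {j k : ℕ} (hj : j ≠ 0) (hk : k ≤ j) :
    |-log (binomHalf j k) - gaussSurprisal j k| ≤ 3 * j := by
  have := neg_log_binomHalf_le hk
  have := mul_le_of_le_one_right (Nat.cast_nonneg j) (by linarith [log_two_lt_d9] : log 2 ≤ 1)
  rw [abs_le]
  constructor <;> linarith [neg_log_binomHalf_nonneg (j := j) (k := k),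
    gaussSurprisal_nonneg (k := k) hj, gaussSurprisal_le hk]

def centralWindow (j : ℕ) : Finset ℕ :=
  (range (j + 1)).filter (fun k => j ≤ 4 * k ∧ 4 * k ≤ 3 * j)

theorem le_two_mul_abs_of_mem_sdiff_centralWindow {j k : ℕ}
    (hk : k ∈ range (j + 1) \ centralWindow j) :
    (j : ℝ) ≤ 2 * |2 * (k : ℝ) - j| := by
  simp only [centralWindow, Finset.mem_sdiff, mem_filter, not_and_or, not_le] at hk
  obtain ⟨hkj, h | h | h⟩ := hk
  · exact absurd hkj h
  · have : (4 * k : ℝ) < j := by exact_mod_cast h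
    rw [abs_of_neg (by linarith)]; linarith
  · have : (3 * j : ℝ) < 4 * k := by exact_mod_cast h
    rw [abs_of_pos (by linarith)]; linarith

theorem sum_binomHalf_sdiff_centralWindow_le {j : ℕ} (hj : j ≠ 0) :
    ∑ k ∈ range (j + 1) \ centralWindow j, binomHalf j k ≤ 48 / j ^ 2 := by
  have hj' : (0 : ℝ) < j := by positivity
  calc ∑ k ∈ range (j + 1) \ centralWindow j, binomHalf j k
      ≤ ∑ k ∈ range (j + 1) \ centralWindow j,
          16 / j ^ 4 * (binomHalf j k * (2 * k - j) ^ 4) := by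
        refine sum_le_sum fun k hk => ?_
        have h := pow_le_pow_left₀ hj'.le (le_two_mul_abs_of_mem_sdiff_centralWindow hk) 4
        rw [mul_pow, pow_abs, abs_of_nonneg (by positivity)] at h
        have := (binomHalf_pos (mem_range_succ_iff.mp (Finset.mem_sdiff.mp hk).1)).le
        rw [div_mul_eq_mul_div, le_div_iff₀ (by positivity)]
        nlinarith
    _ ≤ ∑ k ∈ range (j + 1), 16 / j ^ 4 * (binomHalf j k * (2 * k - j) ^ 4) := by
        refine sum_le_sum_of_subset_of_nonneg sdiff_subset fun k hk _ => ?_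
        have := (binomHalf_pos (mem_range_succ_iff.mp hk)).le
        positivity
    _ ≤ 48 / j ^ 2 := by
        rw [← mul_sum, sum_binomHalf_mul_pow_four, div_mul_eq_mul_div,
          div_le_div_iff₀ (by positivity) (by positivity)]
        nlinarith

theorem abs_neg_log_binomHalf_sub_gaussSurprisal_le_of_mem_centralWindow {j k : ℕ} (hj : 4 ≤ j)
    (hk : k ∈ centralWindow j) :
    |-log (binomHalf j k) - gaussSurprisal j k|
      ≤ 5 / (2 * j ^ 3) * (2 * k - j) ^ 4 + 1 / j ^ 2 * (2 * k - j) ^ 2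
        + 2 * stirlingRemainder (j / 4) := by
  simp only [centralWindow, mem_filter, mem_range] at hk
  obtain ⟨-, hk₁, hk₂⟩ := hk
  have hj' : (0 : ℝ) < j := by positivity
  set u : ℝ := (2 * k - j) / (2 * j) with hu_def
  have hX : (2 * k - j : ℝ) = 2 * j * u := by rw [hu_def]; field_simp
  have hu : |u| ≤ 1 / 4 := by
    have h₁ : (j : ℝ) ≤ 4 * k := by exact_mod_cast hk₁
    have h₂ : (4 * k : ℝ) ≤ 3 * j := by exact_mod_cast hk₂
    rw [abs_le, hu_def, le_div_iff₀ (by positivity), div_le_iff₀ (by positivity)]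
    constructor <;> linarith
  rw [neg_log_binomHalf_eq (u := u) (by omega) (by omega) (by rw [hu_def]; field_simp; ring),
    gaussSurprisal, hX]
  have hφ := abs_le.mp (abs_log_add_log_sub_two_mul_sq_le hu)
  have hlog := abs_le.mp (abs_log_one_sub_le (x := 4 * u ^ 2) (by
    rw [abs_of_nonneg (by positivity)]; nlinarith [abs_le.mp hu, sq_abs u]))
  rw [abs_of_nonneg (by positivity)] at hlog
  have hRj := stirlingRemainder_le_of_le (m := j / 4) (n := j) (by omega) (by omega)
  have hRk := stirlingRemainder_le_of_le (m := j / 4) (n := k) (by omega) (by omega)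
  have hRjk := stirlingRemainder_le_of_le (m := j / 4) (n := j - k) (by omega) (by omega)
  have hR₀ := stirlingRemainder_nonneg (n := j) (by omega)
  have hR₁ := stirlingRemainder_nonneg (n := k) (by omega)
  have hR₂ := stirlingRemainder_nonneg (n := j - k) (by omega)
  have e₁ : 5 / (2 * (j : ℝ) ^ 3) * (2 * j * u) ^ 4 = 40 * j * u ^ 4 := by field_simp; ring
  have e₂ : 1 / (j : ℝ) ^ 2 * (2 * j * u) ^ 2 = 4 * u ^ 2 := by field_simp; ring
  have e₃ : (2 * j * u) ^ 2 / (2 * j) = j * (2 * u ^ 2) := by field_simp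
  rw [e₁, e₂, e₃, abs_le]
  have := mul_le_mul_of_nonneg_left hφ.1 hj'.le
  have := mul_le_mul_of_nonneg_left hφ.2 hj'.le
  have : 0 ≤ (j : ℝ) * u ^ 4 := by positivity
  constructor <;> linarith

theorem sum_centralWindow_binomHalf_mul_abs_sub_le {j : ℕ} (hj : 4 ≤ j) :
    ∑ k ∈ centralWindow j, binomHalf j k * |-log (binomHalf j k) - gaussSurprisal j k|
      ≤ 9 / j + 2 * stirlingRemainder (j / 4) := by
  have hj' : (0 : ℝ) < j := by positivity
  set M := stirlingRemainder (j / 4)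
  have hM : 0 ≤ M := stirlingRemainder_nonneg (by omega)
  calc ∑ k ∈ centralWindow j, binomHalf j k * |-log (binomHalf j k) - gaussSurprisal j k|
      ≤ ∑ k ∈ centralWindow j, binomHalf j k
          * (5 / (2 * j ^ 3) * (2 * k - j) ^ 4 + 1 / j ^ 2 * (2 * k - j) ^ 2 + 2 * M) :=
        sum_le_sum fun k hk => mul_le_mul_of_nonneg_left
          (abs_neg_log_binomHalf_sub_gaussSurprisal_le_of_mem_centralWindow hj hk)
          (binomHalf_pos (mem_range_succ_iff.mp (mem_filter.mp hk).1)).le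
    _ ≤ ∑ k ∈ range (j + 1), binomHalf j k
          * (5 / (2 * j ^ 3) * (2 * k - j) ^ 4 + 1 / j ^ 2 * (2 * k - j) ^ 2 + 2 * M) := by
        refine sum_le_sum_of_subset_of_nonneg (filter_subset _ _) fun k hk _ => ?_
        have := (binomHalf_pos (mem_range_succ_iff.mp hk)).le
        positivity
    _ = 5 / (2 * j ^ 3) * (3 * j ^ 2 - 2 * j) + 1 / j ^ 2 * j + 2 * M := by
        simp_rw [mul_add, sum_add_distrib, mul_left_comm (binomHalf j _), ← mul_sum, ← sum_mul,
          sum_binomHalf_mul_pow_four, sum_binomHalf_mul_sq, sum_binomHalf, one_mul]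
    _ ≤ 9 / j + 2 * M := by
        have : 5 / (2 * (j : ℝ) ^ 3) * (3 * j ^ 2 - 2 * j) + 1 / j ^ 2 * j ≤ 9 / j := by
          field_simp; nlinarith
        linarith

theorem sum_sdiff_centralWindow_binomHalf_mul_abs_sub_le {j : ℕ} (hj : j ≠ 0) :
    ∑ k ∈ range (j + 1) \ centralWindow j,
        binomHalf j k * |-log (binomHalf j k) - gaussSurprisal j k| ≤ 144 / j := by
  have hj' : (0 : ℝ) < j := by positivity
  calc ∑ k ∈ range (j + 1) \ centralWindow j,
        binomHalf j k * |-log (binomHalf j k) - gaussSurprisal j k|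
      ≤ ∑ k ∈ range (j + 1) \ centralWindow j, binomHalf j k * (3 * j) := by
        refine sum_le_sum fun k hk => ?_
        have hkj := mem_range_succ_iff.mp (Finset.mem_sdiff.mp hk).1
        exact mul_le_mul_of_nonneg_left (abs_neg_log_binomHalf_sub_gaussSurprisal_le hj hkj)
          (binomHalf_pos hkj).le
    _ ≤ 48 / j ^ 2 * (3 * j) := by
        rw [← sum_mul]
        exact mul_le_mul_of_nonneg_right (sum_binomHalf_sdiff_centralWindow_le hj) (by positivity)
    _ = 144 / j := by field_simp; ring

theorem abs_entropy_sub_le {j : ℕ} (hj : 4 ≤ j) :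
    |-(∑ k ∈ range (j + 1), binomHalf j k * log (binomHalf j k))
        - 1 / 2 * log (π * exp 1 * j / 2)|
      ≤ 153 / j + 2 * stirlingRemainder (j / 4) := by
  have hW : centralWindow j ⊆ range (j + 1) := filter_subset _ _
  rw [← sum_binomHalf_mul_gaussSurprisal (by omega), ← sum_neg_distrib, ← sum_sub_distrib]
  simp_rw [show ∀ k, -(binomHalf j k * log (binomHalf j k)) - binomHalf j k * gaussSurprisal j k
    = binomHalf j k * (-log (binomHalf j k) - gaussSurprisal j k) from fun k => by ring]
  rw [← sum_sdiff hW]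
  calc _ ≤ _ := abs_add_le _ _
    _ ≤ 144 / j + (9 / j + 2 * stirlingRemainder (j / 4)) :=
      add_le_add
        ((abs_sum_binomHalf_mul_le _ sdiff_subset _).trans
          (sum_sdiff_centralWindow_binomHalf_mul_abs_sub_le (by omega)))
        ((abs_sum_binomHalf_mul_le _ hW _).trans
          (sum_centralWindow_binomHalf_mul_abs_sub_le hj))
    _ = 153 / j + 2 * stirlingRemainder (j / 4) := by ring

end BinomialEntropy

open BinomialEntropy

/-- The Shannon entropy of `Binomial(j, 1/2)` satisfies
`H(j) = (1/2) ln(π e j / 2) + o(1)` as `j → ∞`. -/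
theorem binomial_entropy_asymptotic :
    Tendsto (fun j : ℕ =>
      (-(∑ k ∈ Finset.range (j + 1),
          ((2:ℝ) ^ j)⁻¹ * (j.choose k : ℝ) *
            Real.log (((2:ℝ) ^ j)⁻¹ * (j.choose k : ℝ)))) -
        (1 / 2) * Real.log (Real.pi * Real.exp 1 * (j : ℝ) / 2))
      atTop (nhds 0) := by
  have hbound : Tendsto (fun j : ℕ => 153 / (j : ℝ) + 2 * stirlingRemainder (j / 4))
      atTop (𝓝 0) := by
    simpa using (tendsto_const_div_atTop_nhds_zero_nat 153).add
      ((tendsto_stirlingRemainder.comp (Nat.tendsto_div_const_atTop four_ne_zero)).const_mul 2)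
  refine squeeze_zero_norm' ?_ hbound
  filter_upwards [eventually_ge_atTop 4] with j hj
  exact abs_entropy_sub_le hj
end
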